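/- arXiv:1211.2301 — 6 statements merged into one kernel-verified Lean document; each statement's English description precedes it below -/
import Mathlib

section
/- Let e be a transitive relation on a set E. Then e is square-free if and only if every regular closed subset of e is clopen. -/
/-- A binary relation (as a set of pairs) is transitive. -/
def TransRel {E : Type*} (a : Set (E × E)) : Prop :=
  ∀ x y z : E, (x, y) ∈ a → (y, z) ∈ a → (x, z) ∈ a

/-- The transitive closure of a set of pairs. -/
def tcl {E : Type*} (a : Set (E × E)) : Set (E × E) :=
  {p | Relation.TransGen (fun u v => (u, v) ∈ a) p.1 p.2}

/-- The interior of `a` relative to `e`. -/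
def tint {E : Type*} (e a : Set (E × E)) : Set (E × E) :=
  e \ tcl (e \ a)

/-- `a` is a closed subset of `e`. -/
def IsClosedIn {E : Type*} (e a : Set (E × E)) : Prop :=
  a ⊆ e ∧ TransRel a

/-- `a` is an open subset of `e`. -/
def IsOpenIn {E : Type*} (e a : Set (E × E)) : Prop :=
  a ⊆ e ∧ TransRel (e \ a)

/-- `a` is a clopen subset of `e`. -/
def IsClopenIn {E : Type*} (e a : Set (E × E)) : Prop :=
  a ⊆ e ∧ TransRel a ∧ TransRel (e \ a)

/-- `a` is a regular closed subset of `e`. -/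
def RegClosed {E : Type*} (e a : Set (E × E)) : Prop :=
  a ⊆ e ∧ a = tcl (tint e a)

/-- The reflexive preordering `x ⊴ y` associated with `e`. -/
def rle {E : Type*} (e : Set (E × E)) (x y : E) : Prop :=
  (x, y) ∈ e ∨ x = y

/-- `x ≡ y`: `x ⊴ y` and `y ⊴ x`. -/
def eqv {E : Type*} (e : Set (E × E)) (x y : E) : Prop :=
  rle e x y ∧ rle e y x

/-- `e` is square-free. -/
def SqFree {E : Type*} (e : Set (E × E)) : Prop :=
  ∀ a b x y : E, (a, b) ∈ e → rle e a x → rle e x b → rle e a y → rle e y b →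
    rle e x y ∨ rle e y x

/-- The interval `[a,b] = {x | a ⊴ x ⊴ b}`. -/
def cce {E : Type*} (e : Set (E × E)) (a b : E) : Set E :=
  {x | rle e a x ∧ rle e x b}

/-- `(a,b,U) ∈ F(e)`. -/
def Ftriple {E : Type*} (e : Set (E × E)) (a b : E) (U : Set E) : Prop :=
  (a, b) ∈ e ∧ U ⊆ cce e a b ∧ (a ≠ b → a ∉ U ∧ b ∈ U)

/-- The clopen set `⟨a,b,U⟩ = e ∩ (({a} ∪ Uᶜ) × ({b} ∪ U))`. -/
def pji {E : Type*} (e : Set (E × E)) (a b : E) (U : Set E) : Set (E × E) :=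
  e ∩ ((({a} : Set E) ∪ (cce e a b \ U)) ×ˢ (({b} : Set E) ∪ U))

/-- The set `p₋` associated with `p = ⟨a,b,U⟩`: if `a ≠ b` it is
`p \ ([a] × [b])`, and if `a = b` it is `p \ {(a,a)}`. -/
def pminus {E : Type*} (e : Set (E × E)) (a b : E) (U : Set E) : Set (E × E) :=
  {z ∈ pji e a b U | ¬ ((a ≠ b ∧ eqv e z.1 a ∧ eqv e z.2 b) ∨ (a = b ∧ z = (a, a)))}

/-! If `e` is square-free and `a = cl (int a)`, suppose `(x, y), (y, z) ∈ e \ a` but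
`(x, z) ∈ a`. Then `x` and `z` are joined by a chain in `int a`. No point of the chain lies above
`y`: otherwise the link ending there would lie in `cl (e \ a)`, because square-freeness of the
interval `[x, z]` puts the previous point of the chain below `y`. This fails at the end `z`.

Conversely, if `x` and `y` are incomparable points between `s ◁ t`, the pairs of `e` with an
endpoint at `x` form an open set whose closure is regular closed. It contains `(s, t)`, but
neither `(s, y)` nor `(y, t)`, since each of its pairs passes through `x`. -/

section Closure

variable {E : Type*} {e a b : Set (E × E)}

theorem transRel_tcl (a : Set (E × E)) : TransRel (tcl a) :=
  fun _ _ _ => Relation.TransGen.trans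

theorem subset_tcl (a : Set (E × E)) : a ⊆ tcl a :=
  fun _ h => Relation.TransGen.single h

theorem tcl_subset (h : a ⊆ b) (hb : TransRel b) : tcl a ⊆ b := by
  rintro ⟨x, y⟩ (hxy : Relation.TransGen _ x y)
  induction hxy with
  | single hxy => exact h hxy
  | tail _ hyz ih => exact hb _ _ _ ih (h hyz)

theorem tcl_mono (h : a ⊆ b) : tcl a ⊆ tcl b :=
  tcl_subset (h.trans (subset_tcl b)) (transRel_tcl b)

theorem tint_subset (e a : Set (E × E)) : tint e a ⊆ a := by
  intro p hp
  by_contra hpa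
  exact hp.2 (subset_tcl _ ⟨hp.1, hpa⟩)

theorem IsOpenIn.subset_tint (hb : IsOpenIn e b) (hba : b ⊆ a) : b ⊆ tint e a := by
  intro p hp
  refine ⟨hb.1 hp, fun hpc => ?_⟩
  have hsub : tcl (e \ a) ⊆ e \ b := tcl_subset (Set.sdiff_subset_sdiff_right hba) hb.2
  exact (hsub hpc).2 hp

theorem IsOpenIn.regClosed_tcl (he : TransRel e) (hb : IsOpenIn e b) :
    RegClosed e (tcl b) := by
  refine ⟨tcl_subset hb.1 he, (tcl_mono (hb.subset_tint (subset_tcl b))).antisymm ?_⟩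
  exact tcl_subset (tint_subset e _) (transRel_tcl b)

theorem RegClosed.transRel (ha : RegClosed e a) : TransRel a := by
  rw [ha.2]
  exact transRel_tcl _

end Closure

section Preorder

variable {E : Type*} {e a : Set (E × E)} {x y z w : E}

theorem rle_refl (e : Set (E × E)) (x : E) : rle e x x :=
  Or.inr rfl

theorem rle_of_mem (h : (x, y) ∈ e) : rle e x y :=
  Or.inl h

theorem rle_mono (hae : a ⊆ e) : rle a x y → rle e x y :=
  Or.imp_left (@hae (x, y))

theorem mem_of_mem_of_rle (ha : TransRel a) (hxy : (x, y) ∈ a) (hyz : rle a y z) :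
    (x, z) ∈ a := by
  rcases hyz with hyz | rfl
  exacts [ha _ _ _ hxy hyz, hxy]

end Preorder

def star {E : Type*} (e : Set (E × E)) (x : E) : Set (E × E) :=
  {p ∈ e | p.1 = x ∨ p.2 = x}

section Star

variable {E : Type*} {e : Set (E × E)} {x : E}

theorem isOpenIn_star (he : TransRel e) (x : E) : IsOpenIn e (star e x) := by
  refine ⟨fun _ hp => hp.1, ?_⟩
  rintro p q r ⟨hpq, hpq'⟩ ⟨hqr, hqr'⟩
  refine ⟨he _ _ _ hpq hqr, ?_⟩
  rintro ⟨-, rfl | rfl⟩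
  exacts [hpq' ⟨hpq, Or.inl rfl⟩, hqr' ⟨hqr, Or.inr rfl⟩]

theorem tcl_star_subset (e : Set (E × E)) (x : E) :
    tcl (star e x) ⊆ {p | rle e p.1 x ∧ rle e x p.2} := by
  refine tcl_subset ?_ fun p q r hpq hqr => ⟨hpq.1, hqr.2⟩
  rintro ⟨p, q⟩ ⟨hpq, rfl | rfl⟩
  exacts [⟨rle_refl e _, rle_of_mem hpq⟩, ⟨rle_of_mem hpq, rle_refl e _⟩]

end Star

section SquareFree

variable {E : Type*} {e a : Set (E × E)} {p v w x y z : E}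

theorem mem_tcl_diff_of_rle (ha : TransRel a) (hpy : (p, y) ∈ e \ a) (hyz : (y, z) ∉ a)
    (hyw : rle e y w) (hwz : rle a w z) : (p, w) ∈ tcl (e \ a) := by
  rcases hyw with hyw | rfl
  · have hyw' : (y, w) ∉ a := fun h => hyz (mem_of_mem_of_rle ha h hwz)
    exact transRel_tcl _ _ _ _ (subset_tcl _ hpy) (subset_tcl _ ⟨hyw, hyw'⟩)
  · exact subset_tcl _ hpy

theorem SqFree.mem_diff_of_not_rle (hsf : SqFree e) (hae : a ⊆ e) (ha : TransRel a)
    (hxz : (x, z) ∈ e) (hxy : (x, y) ∈ e \ a) (hyz : (y, z) ∈ e) (hxv : (x, v) ∈ a)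
    (hvz : rle a v z) (hyv : ¬ rle e y v) : (v, y) ∈ e \ a := by
  have hvy : rle e v y :=
    (hsf x z y v hxz (rle_of_mem hxy.1) (rle_of_mem hyz) (rle_of_mem (hae hxv))
      (rle_mono hae hvz)).resolve_left hyv
  exact ⟨hvy.resolve_right fun h => hyv (h ▸ rle_refl e y), fun h => hxy.2 (ha _ _ _ hxv h)⟩

theorem SqFree.not_rle_of_transGen_tint (hsf : SqFree e) (ha : RegClosed e a)
    (hxz : (x, z) ∈ e) (hxy : (x, y) ∈ e \ a) (hyz : (y, z) ∈ e \ a)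
    (hxw : Relation.TransGen (fun u v => (u, v) ∈ tint e a) x w) (hwz : rle a w z) :
    ¬ rle e y w := by
  intro hyw
  induction hxw with
  | single hxw =>
    exact hxw.2 (mem_tcl_diff_of_rle ha.transRel hxy hyz.2 hyw hwz)
  | @tail v w hxv hvw ih =>
    have hvz : rle a v z := rle_of_mem (mem_of_mem_of_rle ha.transRel (tint_subset e a hvw) hwz)
    have hxv' : (x, v) ∈ a := by rw [ha.2]; exact hxv
    have hvy := hsf.mem_diff_of_not_rle ha.1 ha.transRel hxz hxy hyz.1 hxv' hvz (ih hvz)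
    exact hvw.2 (mem_tcl_diff_of_rle ha.transRel hvy hyz.2 hyw hwz)

theorem SqFree.transRel_diff_of_regClosed (he : TransRel e) (hsf : SqFree e)
    (ha : RegClosed e a) : TransRel (e \ a) := by
  intro x y z hxy hyz
  refine ⟨he _ _ _ hxy.1 hyz.1, fun hxz => ?_⟩
  rw [ha.2] at hxz
  exact hsf.not_rle_of_transGen_tint ha (he _ _ _ hxy.1 hyz.1) hxy hyz hxz (rle_refl a z)
    (rle_of_mem hyz.1)

theorem sqFree_of_forall_regClosed (he : TransRel e)
    (H : ∀ a, RegClosed e a → TransRel (e \ a)) : SqFree e := by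
  intro s t x y _ hsx hxt hsy hyt
  by_contra! hxy
  have hne {u v : E} (huv : rle e u v) (h : u = v → False) : (u, v) ∈ e := huv.resolve_right h
  have hsxe := hne hsx fun h => hxy.1 (h ▸ hsy)
  have hxte := hne hxt fun h => hxy.2 (h ▸ hyt)
  have hsye := hne hsy fun h => hxy.2 (h ▸ hsx)
  have hyte := hne hyt fun h => hxy.1 (h ▸ hxt)
  have hst_cl : (s, t) ∈ tcl (star e x) :=
    transRel_tcl _ _ _ _ (subset_tcl _ ⟨hsxe, Or.inr rfl⟩) (subset_tcl _ ⟨hxte, Or.inl rfl⟩)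
  have hsy_cl : (s, y) ∉ tcl (star e x) := fun h => hxy.1 (tcl_star_subset e x h).2
  have hyt_cl : (y, t) ∉ tcl (star e x) := fun h => hxy.2 (tcl_star_subset e x h).1
  exact (H _ ((isOpenIn_star he x).regClosed_tcl he) _ _ _ ⟨hsye, hsy_cl⟩ ⟨hyte, hyt_cl⟩).2 hst_cl

end SquareFree

/-- `e` is square-free iff every regular closed subset of `e` is clopen. -/
theorem squareFree_iff_regClosed_clopen {E : Type*} (e : Set (E × E)) (he : TransRel e) :
    SqFree e ↔ ∀ a : Set (E × E), RegClosed e a → IsClopenIn e a :=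
  ⟨fun hsf _ ha => ⟨ha.1, ha.transRel, hsf.transRel_diff_of_regClosed he ha⟩,
    fun H => sqFree_of_forall_regClosed he fun a ha => (H a ha).2.2⟩
end

section
/- Let e be a transitive relation on a set E. Then e is square-free if and only if the poset Clop(e) of all clopen subsets of e, ordered by inclusion, is a lattice, i.e., every pair of clopen subsets of e has a least upper bound and a greatest lower bound within Clop(e). -/
/-! The join of two clopen sets `c`, `d` is the transitive closure of `c ∪ d`: square-freeness is
what makes the complement of this closure transitive, and meets are obtained from joins
by complementation. Conversely, if `x`, `y` are incomparable elements of an interval `[a, b]`,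
the clopen sets `e ∩ [a, x]²` and `e ∩ [x, b]²` have no least clopen upper bound: such a bound
contains `(a, b)`, hence `(a, y)` or `(y, b)`, yet it lies in both `e ∩ [a, b] × ([a, b] \ {y})`
and `e ∩ ([a, b] \ {y}) × [a, b]`. -/

section

variable {E : Type*} {e c d : Set (E × E)}

theorem subset_tcl_s1 : c ⊆ tcl c :=
  fun _ h => Relation.TransGen.single h

theorem transRel_tcl_s1 : TransRel (tcl c) :=
  fun _ _ _ h₁ h₂ => Relation.TransGen.trans h₁ h₂

theorem tcl_subset_s1 (hd : TransRel d) (hcd : c ⊆ d) : tcl c ⊆ d := by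
  rintro ⟨u, w⟩ (h : Relation.TransGen _ u w)
  induction h with
  | single h => exact hcd h
  | tail _ h ih => exact hd _ _ _ ih (hcd h)

/-- Whenever a pair of `c` factors through `e`, one of the two factors lies in `c`. -/
def SplitsIn (e c : Set (E × E)) : Prop :=
  ∀ u v w : E, (u, w) ∈ c → (u, v) ∈ e → (v, w) ∈ e → (u, v) ∈ c ∨ (v, w) ∈ c

theorem transRel_diff_iff_splitsIn (he : TransRel e) : TransRel (e \ c) ↔ SplitsIn e c := by
  constructor
  · intro hc u v w huw huv hvw
    by_contra! h
    exact (hc u v w ⟨huv, h.1⟩ ⟨hvw, h.2⟩).2 huw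
  · intro hc u v w huv hvw
    refine ⟨he u v w huv.1 hvw.1, fun huw => ?_⟩
    rcases hc u v w huw huv.1 hvw.1 with h | h
    exacts [huv.2 h, hvw.2 h]

theorem SplitsIn.union (hc : SplitsIn e c) (hd : SplitsIn e d) : SplitsIn e (c ∪ d) := by
  rintro u v w (h | h) huv hvw
  · exact (hc u v w h huv hvw).imp Or.inl Or.inl
  · exact (hd u v w h huv hvw).imp Or.inr Or.inr

/-- Along a chain `u = z₀ ◁ z₁ ◁ ⋯ ◁ w` in `c`, square-freeness of `[zᵢ, w]` makes `v` comparable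
with each `zᵢ₊₁`, so some link `(zᵢ, zᵢ₊₁)` has `zᵢ ◁ v ◁ zᵢ₊₁` and can be split at `v`. -/
theorem SplitsIn.tcl (he : TransRel e) (hsq : SqFree e) (hce : c ⊆ e) (hc : SplitsIn e c) :
    SplitsIn e (tcl c) := by
  intro u v w huw
  change Relation.TransGen _ u w at huw
  induction huw using Relation.TransGen.head_induction_on generalizing v with
  | single h => exact fun huv hvw => (hc _ _ _ h huv hvw).imp (subset_tcl_s1 ·) (subset_tcl_s1 ·)
  | @head z z' hzz' hz'w ih =>
    intro hzv hvw
    have hz'w_e : (z', w) ∈ e := tcl_subset_s1 he hce hz'w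
    rcases hsq z w v z' (he _ _ _ hzv hvw) (.inl hzv) (.inl hvw) (.inl (hce hzz'))
      (.inl hz'w_e) with (hvz' | rfl) | (hz'v | rfl)
    · rcases hc _ _ _ hzz' hzv hvz' with h | h
      · exact .inl (subset_tcl_s1 h)
      · exact .inr (Relation.TransGen.head h hz'w)
    · exact .inr hz'w
    · exact (ih v hz'v hvw).imp (Relation.TransGen.head hzz') id
    · exact .inl (subset_tcl_s1 hzz')

theorem IsClopenIn.diff (hc : IsClopenIn e c) : IsClopenIn e (e \ c) :=
  ⟨Set.sdiff_subset, hc.2.2, by rw [Set.sdiff_sdiff_cancel_left hc.1]; exact hc.2.1⟩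

theorem IsClopenIn.tcl_union (he : TransRel e) (hsq : SqFree e) (hc : IsClopenIn e c)
    (hd : IsClopenIn e d) : IsClopenIn e (tcl (c ∪ d)) := by
  have hcd : c ∪ d ⊆ e := Set.union_subset hc.1 hd.1
  refine ⟨tcl_subset_s1 he hcd, transRel_tcl_s1, (transRel_diff_iff_splitsIn he).2 ?_⟩
  exact (((transRel_diff_iff_splitsIn he).1 hc.2.2).union
    ((transRel_diff_iff_splitsIn he).1 hd.2.2)).tcl he hsq hcd

theorem exists_clopen_lub (he : TransRel e) (hsq : SqFree e) (hc : IsClopenIn e c)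
    (hd : IsClopenIn e d) :
    ∃ s, IsClopenIn e s ∧ c ⊆ s ∧ d ⊆ s ∧ ∀ w, IsClopenIn e w → c ⊆ w → d ⊆ w → s ⊆ w :=
  ⟨tcl (c ∪ d), hc.tcl_union he hsq hd, fun _ h => subset_tcl_s1 (.inl h),
    fun _ h => subset_tcl_s1 (.inr h),
    fun _ hw hcw hdw => tcl_subset_s1 hw.2.1 (Set.union_subset hcw hdw)⟩

theorem exists_clopen_glb (he : TransRel e) (hsq : SqFree e) (hc : IsClopenIn e c)
    (hd : IsClopenIn e d) :
    ∃ m, IsClopenIn e m ∧ m ⊆ c ∧ m ⊆ d ∧ ∀ w, IsClopenIn e w → w ⊆ c → w ⊆ d → w ⊆ m := by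
  obtain ⟨s, hs, hcs, hds, hmin⟩ := exists_clopen_lub he hsq hc.diff hd.diff
  refine ⟨e \ s, hs.diff, Set.sdiff_subset_comm.1 hcs, Set.sdiff_subset_comm.1 hds,
    fun w hw hwc hwd => ?_⟩
  have hsw : s ⊆ e \ w :=
    hmin _ hw.diff (Set.sdiff_subset_sdiff_right hwc) (Set.sdiff_subset_sdiff_right hwd)
  exact Set.subset_sdiff.2 ⟨hw.1, (Set.subset_sdiff.1 hsw).2.symm⟩

theorem rle_trans (he : TransRel e) {x y z : E} (hxy : rle e x y) (hyz : rle e y z) :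
    rle e x z := by
  rcases hxy with hxy | rfl
  · rcases hyz with hyz | rfl
    exacts [.inl (he _ _ _ hxy hyz), .inl hxy]
  · exact hyz

theorem cce_subset_cce (he : TransRel e) {a b a' b' : E} (ha : rle e a a') (hb : rle e b' b) :
    cce e a' b' ⊆ cce e a b :=
  fun _ hz => ⟨rle_trans he ha hz.1, rle_trans he hz.2 hb⟩

theorem IsClopenIn.inter_prod (he : TransRel e) {A B : Set E}
    (hAB : ∀ u v w, u ∈ A → w ∈ B → (u, v) ∈ e → (v, w) ∈ e → v ∈ A ∪ B) :
    IsClopenIn e (e ∩ A ×ˢ B) := by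
  refine ⟨Set.inter_subset_left, ?_, ?_⟩
  · rintro u v w ⟨huv, hu, -⟩ ⟨hvw, -, hw⟩
    exact ⟨he _ _ _ huv hvw, hu, hw⟩
  · rintro u v w ⟨huv, huv'⟩ ⟨hvw, hvw'⟩
    refine ⟨he _ _ _ huv hvw, fun ⟨_, hu, hw⟩ => ?_⟩
    rcases hAB u v w hu hw huv hvw with hv | hv
    exacts [hvw' ⟨hvw, hv, hw⟩, huv' ⟨huv, hu, hv⟩]

theorem IsClopenIn.inter_prod_of_cce (he : TransRel e) {a b : E} {A B : Set E}
    (hA : A ⊆ cce e a b) (hB : B ⊆ cce e a b) (hAB : cce e a b ⊆ A ∪ B) :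
    IsClopenIn e (e ∩ A ×ˢ B) :=
  .inter_prod he fun _ _ _ hu hw huv hvw =>
    hAB ⟨rle_trans he (hA hu).1 (.inl huv), rle_trans he (.inl hvw) (hB hw).2⟩

theorem sqFree_of_exists_clopen_lub (he : TransRel e)
    (h : ∀ c d, IsClopenIn e c → IsClopenIn e d →
      ∃ s, IsClopenIn e s ∧ c ⊆ s ∧ d ⊆ s ∧ ∀ w, IsClopenIn e w → c ⊆ w → d ⊆ w → s ⊆ w) :
    SqFree e := by
  intro a b x y _ hax hxb hay hyb
  by_contra! hcomp
  obtain ⟨hxy, hyx⟩ := hcomp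
  have mem_of_rle {u v : E} (huv : rle e u v) (hne : ¬ rle e v u) : (u, v) ∈ e :=
    huv.resolve_right fun h => hne (.inr h.symm)
  set I := cce e a b
  set J := I \ {y}
  have hJ₁ : cce e a x ⊆ J := fun z hz =>
    ⟨cce_subset_cce he (.inr rfl) hxb hz, fun (h : z = y) => hyx (h ▸ hz.2)⟩
  have hJ₂ : cce e x b ⊆ J := fun z hz =>
    ⟨cce_subset_cce he hax (.inr rfl) hz, fun (h : z = y) => hxy (h ▸ hz.1)⟩
  obtain ⟨s, hs, hps, hqs, hmin⟩ := h (e ∩ cce e a x ×ˢ cce e a x) (e ∩ cce e x b ×ˢ cce e x b)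
    (.inter_prod_of_cce he subset_rfl subset_rfl Set.subset_union_left)
    (.inter_prod_of_cce he subset_rfl subset_rfl Set.subset_union_left)
  have hJs : ∀ w, IsClopenIn e w → e ∩ J ×ˢ J ⊆ w → s ⊆ w := fun w hw hJw =>
    hmin w hw (subset_trans (Set.inter_subset_inter_right _ (Set.prod_mono hJ₁ hJ₁)) hJw)
      (subset_trans (Set.inter_subset_inter_right _ (Set.prod_mono hJ₂ hJ₂)) hJw)
  have hs₁ : s ⊆ e ∩ I ×ˢ J :=
    hJs _ (.inter_prod_of_cce he subset_rfl Set.sdiff_subset Set.subset_union_left)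
      (Set.inter_subset_inter_right _ (Set.prod_mono Set.sdiff_subset subset_rfl))
  have hs₂ : s ⊆ e ∩ J ×ˢ I :=
    hJs _ (.inter_prod_of_cce he Set.sdiff_subset subset_rfl Set.subset_union_right)
      (Set.inter_subset_inter_right _ (Set.prod_mono subset_rfl Set.sdiff_subset))
  have hab : (a, b) ∈ s := hs.2.1 a x b
    (hps ⟨mem_of_rle hax fun h => hxy (rle_trans he h hay), ⟨.inr rfl, hax⟩, hax, .inr rfl⟩)
    (hqs ⟨mem_of_rle hxb fun h => hyx (rle_trans he hyb h), ⟨.inr rfl, hxb⟩, hxb, .inr rfl⟩)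
  rcases (transRel_diff_iff_splitsIn he).1 hs.2.2 a y b hab
    (mem_of_rle hay fun h => hyx (rle_trans he h hax))
    (mem_of_rle hyb fun h => hxy (rle_trans he hxb h)) with hay_s | hyb_s
  · exact (hs₁ hay_s).2.2.2 rfl
  · exact (hs₂ hyb_s).2.1.2 rfl

end

/-- `e` is square-free iff the poset of clopen subsets of `e` is a lattice. -/
theorem squareFree_iff_clopen_lattice {E : Type*} (e : Set (E × E)) (he : TransRel e) :
    SqFree e ↔
      ∀ x y : Set (E × E), IsClopenIn e x → IsClopenIn e y →
        (∃ s, IsClopenIn e s ∧ x ⊆ s ∧ y ⊆ s ∧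
          ∀ w, IsClopenIn e w → x ⊆ w → y ⊆ w → s ⊆ w) ∧
        (∃ m, IsClopenIn e m ∧ m ⊆ x ∧ m ⊆ y ∧
          ∀ w, IsClopenIn e w → w ⊆ x → w ⊆ y → w ⊆ m) := by
  constructor
  · intro hsq x y hx hy
    exact ⟨exists_clopen_lub he hsq hx hy, exists_clopen_glb he hsq hx hy⟩
  · intro h
    exact sqFree_of_exists_clopen_lub he fun x y hx hy => (h x y hx hy).1
end

section
/- Let e be a transitive relation on a set E and suppose there exist pairwise distinct elements a₀, a₁, b ∈ E such that (a₀,a₁) ∈ e, (a₁,a₀) ∈ e, and either (b,a₀) ∈ e or (a₀,b) ∈ e. Then there exist clopen subsets a₀', a₁', c of e such that int(a₀' ∩ c) = ∅, int(a₁' ∩ c) = ∅, c ≠ ∅, and c ⊆ a₀' ∪ a₁'. (Hence the meets of c with a₀' and with a₁' in Reg(e) are both ∅ while the meet of c with the join of a₀' and a₁' is nonzero, so Reg(e) is neither meet-semidistributive nor pseudocomplemented.) -/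
/-! For any `T`, the pairs of `e` entering `T`, namely `e ∩ Tᶜ ×ˢ T`, form a clopen set. Take for
`c` the pairs entering `{a₀, a₁}` and for `x_i` those entering `a_i`; `c` contains `(b, a₀)`. Since
`a₀ ≡ a₁`, every pair `(u, a₀)` of `x₀ ∩ c` factors as `(u, a₁), (a₁, a₀)` through pairs outside
`x₀ ∩ c`, so its interior is empty; likewise for `x₁`. The case `a₀ ◁ b` is the case `b ◁ a₀` for
the converse relation. -/

section

variable {E : Type*}

lemma isClopenIn_inter_compl_prod {e : Set (E × E)} (he : TransRel e) (T : Set E) :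
    IsClopenIn e (e ∩ Tᶜ ×ˢ T) := by
  refine ⟨Set.inter_subset_left, fun _ _ _ hxy hyz => (hyz.2.1 hxy.2.2).elim, ?_⟩
  rintro x y z ⟨hxy, hxy'⟩ ⟨hyz, hyz'⟩
  refine ⟨he x y z hxy hyz, fun ⟨_, hx, hz⟩ => ?_⟩
  by_cases hy : y ∈ T
  · exact hxy' ⟨hxy, hx, hy⟩
  · exact hyz' ⟨hyz, hy, hz⟩

lemma tint_eq_empty_of_forall_detour {e a : Set (E × E)}
    (h : ∀ u v, (u, v) ∈ a → ∃ w, (u, w) ∈ e \ a ∧ (w, v) ∈ e \ a) : tint e a = ∅ := by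
  refine Set.eq_empty_iff_forall_notMem.2 fun ⟨u, v⟩ ⟨huv, hcl⟩ => hcl ?_
  by_cases hmem : (u, v) ∈ a
  · obtain ⟨w, huw, hwv⟩ := h u v hmem
    exact Relation.TransGen.tail (.single huw) hwv
  · exact Relation.TransGen.single ⟨huv, hmem⟩

lemma tint_inter_compl_prod_pair_eq_empty {e : Set (E × E)} (he : TransRel e) {a₀ a₁ : E}
    (h01 : a₀ ≠ a₁) (ha : (a₀, a₁) ∈ e) (ha' : (a₁, a₀) ∈ e) :
    tint e ((e ∩ {a₀}ᶜ ×ˢ {a₀}) ∩ (e ∩ {a₀, a₁}ᶜ ×ˢ {a₀, a₁})) = ∅ := by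
  refine tint_eq_empty_of_forall_detour fun u v ⟨⟨huv, _, hv⟩, _⟩ => ⟨a₁, ?_, ?_⟩
  · obtain rfl : v = a₀ := hv
    exact ⟨he u v a₁ huv ha, fun h => h01 h.1.2.2.symm⟩
  · obtain rfl : v = a₀ := hv
    exact ⟨ha', fun h => h.2.2.1 (Or.inr rfl)⟩

def HasClopenWitness (e : Set (E × E)) : Prop :=
  ∃ x₀ x₁ c : Set (E × E), IsClopenIn e x₀ ∧ IsClopenIn e x₁ ∧ IsClopenIn e c ∧
    tint e (x₀ ∩ c) = ∅ ∧ tint e (x₁ ∩ c) = ∅ ∧ c ≠ ∅ ∧ c ⊆ x₀ ∪ x₁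

lemma hasClopenWitness_of_mem {e : Set (E × E)} (he : TransRel e) {a₀ a₁ b : E}
    (h01 : a₀ ≠ a₁) (h0b : a₀ ≠ b) (h1b : a₁ ≠ b)
    (ha : (a₀, a₁) ∈ e) (ha' : (a₁, a₀) ∈ e) (hb : (b, a₀) ∈ e) : HasClopenWitness e := by
  refine ⟨e ∩ {a₀}ᶜ ×ˢ {a₀}, e ∩ {a₁}ᶜ ×ˢ {a₁}, e ∩ {a₀, a₁}ᶜ ×ˢ {a₀, a₁},
    isClopenIn_inter_compl_prod he _, isClopenIn_inter_compl_prod he _,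
    isClopenIn_inter_compl_prod he _, ?_, ?_, ?_, ?_⟩
  · exact tint_inter_compl_prod_pair_eq_empty he h01 ha ha'
  · rw [Set.pair_comm]
    exact tint_inter_compl_prod_pair_eq_empty he h01.symm ha' ha
  · refine Set.nonempty_iff_ne_empty.1 ⟨(b, a₀), hb, ?_, Or.inl rfl⟩
    rintro (h | h)
    exacts [h0b h.symm, h1b h.symm]
  · rintro ⟨u, v⟩ ⟨huv, hu, rfl | rfl⟩
    exacts [Or.inl ⟨huv, fun h => hu (Or.inl h), rfl⟩, Or.inr ⟨huv, fun h => hu (Or.inr h), rfl⟩]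

lemma TransRel.preimage_swap {a : Set (E × E)} (h : TransRel a) : TransRel (Prod.swap ⁻¹' a) :=
  fun x y z hxy hyz => h z y x hyz hxy

lemma tcl_preimage_swap (a : Set (E × E)) : tcl (Prod.swap ⁻¹' a) = Prod.swap ⁻¹' tcl a := by
  ext ⟨x, y⟩
  exact Relation.transGen_swap

lemma tint_preimage_swap (e a : Set (E × E)) :
    tint (Prod.swap ⁻¹' e) (Prod.swap ⁻¹' a) = Prod.swap ⁻¹' tint e a := by
  rw [tint, ← Set.preimage_sdiff, tcl_preimage_swap, ← Set.preimage_sdiff, tint]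

lemma IsClopenIn.preimage_swap {e a : Set (E × E)} (h : IsClopenIn e a) :
    IsClopenIn (Prod.swap ⁻¹' e) (Prod.swap ⁻¹' a) :=
  ⟨Set.preimage_mono h.1, h.2.1.preimage_swap, h.2.2.preimage_swap⟩

lemma HasClopenWitness.preimage_swap {e : Set (E × E)} (h : HasClopenWitness e) :
    HasClopenWitness (Prod.swap ⁻¹' e) := by
  obtain ⟨x₀, x₁, c, hx₀, hx₁, hc, ht₀, ht₁, hne, hsub⟩ := h
  refine ⟨Prod.swap ⁻¹' x₀, Prod.swap ⁻¹' x₁, Prod.swap ⁻¹' c, hx₀.preimage_swap,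
    hx₁.preimage_swap, hc.preimage_swap, ?_, ?_, ?_, Set.preimage_mono hsub⟩
  · rw [← Set.preimage_inter, tint_preimage_swap, ht₀, Set.preimage_empty]
  · rw [← Set.preimage_inter, tint_preimage_swap, ht₁, Set.preimage_empty]
  · exact (Set.nonempty_iff_ne_empty.2 hne).preimage Prod.swap_surjective |>.ne_empty

end

/-- if `e` has pairwise distinct `a₀, a₁, b` with `a₀ ≡ a₁` and `b ◁ a₀` or
`a₀ ◁ b`, then there are clopen sets `x₀, x₁, c` with `int(x₀ ∩ c) = int(x₁ ∩ c) = ∅`,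
`c ≠ ∅`, and `c ⊆ x₀ ∪ x₁`; so `Reg(e)` is neither meet-semidistributive nor
pseudocomplemented. -/
theorem exists_clopen_witness_nonpseudocomplemented {E : Type*} (e : Set (E × E))
    (he : TransRel e) (a₀ a₁ b : E)
    (h01 : a₀ ≠ a₁) (h0b : a₀ ≠ b) (h1b : a₁ ≠ b)
    (ha : (a₀, a₁) ∈ e) (ha' : (a₁, a₀) ∈ e)
    (hb : (b, a₀) ∈ e ∨ (a₀, b) ∈ e) :
    ∃ x₀ x₁ c : Set (E × E), IsClopenIn e x₀ ∧ IsClopenIn e x₁ ∧ IsClopenIn e c ∧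
      tint e (x₀ ∩ c) = ∅ ∧ tint e (x₁ ∩ c) = ∅ ∧ c ≠ ∅ ∧ c ⊆ x₀ ∪ x₁ := by
  rcases hb with hb | hb
  · exact hasClopenWitness_of_mem he h01 h0b h1b ha ha' hb
  · exact (hasClopenWitness_of_mem he.preimage_swap h01 h0b h1b ha' ha hb).preimage_swap
end

section
/- Let e be a square-free transitive relation on a set E. Then for every closed subset a of e, the interior int(a) is closed; dually, for every open subset a of e, the transitive closure cl(a) is open. -/
/-!
Let `a ⊆ e` be transitive and suppose `x ◁ y ◁ z` while `(x, z)` is joined by a chain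
`x = x₀ ◁ x₁ ◁ ⋯ ◁ xₙ = z` of pairs outside `a`. Square-freeness makes `y` comparable with `x₁`:
if `x₁ ⊴ y`, continue along the chain; if `y ◁ x₁`, then since `(x, x₁) ∉ a` and `a` is transitive,
one of `(x, y)`, `(y, x₁)` lies outside `a`, and we are done. Hence `(x, y)` or `(y, z)` lies in
`cl(e \ a)`, which says exactly that `int(a) = e \ cl(e \ a)` is transitive. The statement about
`cl(a)` for open `a` is the same one, applied to the closed set `e \ a`, since
`e \ cl(a) = int(e \ a)`.
-/

section

variable {E : Type*} {e a : Set (E × E)}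

lemma tcl_subset_s10 (he : TransRel e) (hae : a ⊆ e) : tcl a ⊆ e := by
  rintro ⟨x, z⟩ (h : Relation.TransGen _ x z)
  induction h with
  | single hxz => exact hae hxz
  | tail _ hyz ih => exact he _ _ _ ih (hae hyz)

lemma tint_diff (hae : a ⊆ e) : tint e (e \ a) = e \ tcl a := by
  rw [tint, Set.sdiff_sdiff_cancel_left hae]

lemma mem_diff_left_or_right (ha : TransRel a) {x y z : E} (hxz : (x, z) ∈ e \ a)
    (hxy : (x, y) ∈ e) (hyz : (y, z) ∈ e) : (x, y) ∈ e \ a ∨ (y, z) ∈ e \ a := by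
  by_cases h : (x, y) ∈ a
  · exact .inr ⟨hyz, fun h' => hxz.2 (ha _ _ _ h h')⟩
  · exact .inl ⟨hxy, h⟩

lemma mem_tcl_diff_left_or_right (he : TransRel e) (hsf : SqFree e) (ha : TransRel a)
    {x y z : E} (hxz : (x, z) ∈ tcl (e \ a)) (hxy : (x, y) ∈ e) (hyz : (y, z) ∈ e) :
    (x, y) ∈ tcl (e \ a) ∨ (y, z) ∈ tcl (e \ a) := by
  change Relation.TransGen _ x z at hxz
  change Relation.TransGen _ x y ∨ Relation.TransGen _ y z
  induction hxz using Relation.TransGen.head_induction_on generalizing y with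
  | single hxz =>
    exact (mem_diff_left_or_right ha hxz hxy hyz).imp .single .single
  | @head x b hxb hbz ih =>
    have hbz' : (b, z) ∈ e := tcl_subset_s10 he Set.sdiff_subset hbz
    have hxz : (x, z) ∈ e := he _ _ _ hxb.1 hbz'
    rcases hsf x z b y hxz (.inl hxb.1) (.inl hbz') (.inl hxy) (.inl hyz) with
      (hby | rfl) | (hyb | rfl)
    · exact (ih hby hyz).imp_left (.head hxb)
    · exact .inl (.single hxb)
    · exact (mem_diff_left_or_right ha hxb hxy hyb).imp .single (.head · hbz)
    · exact .inl (.single hxb)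

lemma IsClosedIn.tint (he : TransRel e) (hsf : SqFree e) (ha : IsClosedIn e a) :
    IsClosedIn e (tint e a) := by
  refine ⟨Set.sdiff_subset, fun x y z hxy hyz => ⟨he _ _ _ hxy.1 hyz.1, fun hxz => ?_⟩⟩
  rcases mem_tcl_diff_left_or_right he hsf ha.2 hxz hxy.1 hyz.1 with h | h
  exacts [hxy.2 h, hyz.2 h]

lemma IsOpenIn.tcl (he : TransRel e) (hsf : SqFree e) (ha : IsOpenIn e a) :
    IsOpenIn e (tcl a) := by
  have hclosed : IsClosedIn e (e \ a) := ⟨Set.sdiff_subset, ha.2⟩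
  refine ⟨tcl_subset_s10 he ha.1, ?_⟩
  rw [← tint_diff ha.1]
  exact (hclosed.tint he hsf).2

end

/-- if `e` is square-free, then the interior of every closed subset of `e` is
closed, and the transitive closure of every open subset of `e` is open. -/
theorem squareFree_int_closed_cl_open {E : Type*} (e : Set (E × E)) (he : TransRel e)
    (hsf : SqFree e) :
    (∀ a : Set (E × E), IsClosedIn e a → IsClosedIn e (tint e a)) ∧
    (∀ a : Set (E × E), IsOpenIn e a → IsOpenIn e (tcl a)) :=
  ⟨fun _ ha => ha.tint he hsf, fun _ ha => ha.tcl he hsf⟩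
end

section
/- Let e be a transitive relation on a set E and let (a,b,U) ∈ F(e). Then p = ⟨a,b,U⟩ is a clopen subset of e containing the pair (a,b); moreover the set p₋ is clopen, and every open subset u of e with u ⊊ p satisfies u ⊆ p₋. -/
/-!
`⟨a,b,U⟩` is `e ∩ (A × B)` with `A = {a} ∪ Uᶜ`, `B = {b} ∪ U`, both inside `[a,b]`. Such a
product is always closed; it is open because a middle point `y` of `x ◁ y ◁ z` with `x ∈ A`,
`z ∈ B` lies in `[a,b] ⊆ A ∪ B`, so one of `(x,y)`, `(y,z)` is already in the product. The sets
`A` and `B` meet at most in `a = b`, which is what makes the corner `[a] × [b]` (or `(a,a)`)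
removable without breaking either transitivity. Finally, if an open `u ⊊ p` misses `(s,t) ∈ p`,
then for a corner pair `(x,z)` the chain `x ⊴ s ◁ t ⊴ z` stays in the transitive set `e \ u`,
so `(x,z) ∉ u`.
-/

open Set

namespace TransRel

variable {E : Type*} {c : Set (E × E)} {x y z : E}

theorem mem_of_rle_of_mem (hc : TransRel c) (hxy : rle c x y) (hyz : (y, z) ∈ c) :
    (x, z) ∈ c := by
  rcases hxy with hxy | rfl
  · exact hc _ _ _ hxy hyz
  · exact hyz

theorem mem_of_mem_of_rle (hc : TransRel c) (hxy : (x, y) ∈ c) (hyz : rle c y z) :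
    (x, z) ∈ c := by
  rcases hyz with hyz | rfl
  · exact hc _ _ _ hxy hyz
  · exact hxy

theorem rle_trans (hc : TransRel c) (hxy : rle c x y) (hyz : rle c y z) : rle c x z := by
  rcases hxy with hxy | rfl
  · exact Or.inl (hc.mem_of_mem_of_rle hxy hyz)
  · exact hyz

end TransRel

section Product

variable {E : Type*} {e : Set (E × E)}

theorem transRel_inter_prod (he : TransRel e) (A B : Set E) : TransRel (e ∩ A ×ˢ B) :=
  fun _ _ _ hxy hyz => ⟨he _ _ _ hxy.1 hyz.1, hxy.2.1, hyz.2.2⟩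

theorem transRel_diff_inter_prod (he : TransRel e) {A B : Set E}
    (hmid : ∀ x y z, x ∈ A → z ∈ B → (x, y) ∈ e → (y, z) ∈ e → y ∈ A ∪ B) :
    TransRel (e \ (e ∩ A ×ˢ B)) := by
  rintro x y z ⟨hxy, hxy'⟩ ⟨hyz, hyz'⟩
  refine ⟨he _ _ _ hxy hyz, fun ⟨_, hx, hz⟩ => ?_⟩
  rcases hmid x y z hx hz hxy hyz with hy | hy
  · exact hyz' ⟨hyz, hy, hz⟩
  · exact hxy' ⟨hxy, hx, hy⟩

end Product

section Pji

variable {E : Type*} {e : Set (E × E)} {a b : E} {U : Set E}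

def pjiFst (e : Set (E × E)) (a b : E) (U : Set E) : Set E := {a} ∪ (cce e a b \ U)

def pjiSnd (b : E) (U : Set E) : Set E := {b} ∪ U

theorem pji_eq_inter_prod : pji e a b U = e ∩ pjiFst e a b U ×ˢ pjiSnd b U := rfl

theorem pjiFst_subset_cce (hab : (a, b) ∈ e) : pjiFst e a b U ⊆ cce e a b := by
  rintro x (rfl | ⟨hx, -⟩)
  · exact ⟨Or.inr rfl, Or.inl hab⟩
  · exact hx

theorem pjiSnd_subset_cce (hab : (a, b) ∈ e) (hU : U ⊆ cce e a b) :
    pjiSnd b U ⊆ cce e a b := by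
  rintro x (rfl | hx)
  · exact ⟨Or.inl hab, Or.inr rfl⟩
  · exact hU hx

theorem cce_subset_pjiFst_union_pjiSnd : cce e a b ⊆ pjiFst e a b U ∪ pjiSnd b U := by
  intro y hy
  by_cases hyU : y ∈ U
  · exact Or.inr (Or.inr hyU)
  · exact Or.inl (Or.inr ⟨hy, hyU⟩)

theorem eq_of_mem_pjiFst_of_mem_pjiSnd (hends : a ≠ b → a ∉ U ∧ b ∈ U) {y : E}
    (hy₁ : y ∈ pjiFst e a b U) (hy₂ : y ∈ pjiSnd b U) : y = a ∧ y = b := by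
  by_contra hne
  rcases hy₁ with rfl | ⟨-, hyU⟩ <;> rcases hy₂ with rfl | hyU'
  · exact hne ⟨rfl, rfl⟩
  · exact (hends fun h => hne ⟨rfl, h⟩).1 hyU'
  · exact hyU (hends fun h => hne ⟨h.symm, rfl⟩).2
  · exact hyU hyU'

theorem isClopenIn_pji (he : TransRel e) (hab : (a, b) ∈ e) (hU : U ⊆ cce e a b) :
    IsClopenIn e (pji e a b U) := by
  rw [pji_eq_inter_prod]
  refine ⟨inter_subset_left, transRel_inter_prod he _ _, transRel_diff_inter_prod he ?_⟩
  intro x y z hx hz hxy hyz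
  refine cce_subset_pjiFst_union_pjiSnd ⟨Or.inl ?_, Or.inl ?_⟩
  · exact he.mem_of_rle_of_mem (pjiFst_subset_cce hab hx).1 hxy
  · exact he.mem_of_mem_of_rle hyz (pjiSnd_subset_cce hab hU hz).2

theorem mk_mem_pji (hab : (a, b) ∈ e) : (a, b) ∈ pji e a b U :=
  ⟨hab, Or.inl rfl, Or.inl rfl⟩

variable {x y z : E}

/-- The pairs that `pminus` removes from `pji`, described uniformly in `a` and `b`:
this is `[a] × [b]` if `a ≠ b`, and `{(a, a)}` if `a = b`. -/
def pjiCorner (e : Set (E × E)) (a b : E) : Set (E × E) :=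
  {w | eqv e w.1 a ∧ eqv e w.2 b ∧ (a = b → w = (a, b))}

theorem pminus_eq_pji_diff_pjiCorner : pminus e a b U = pji e a b U \ pjiCorner e a b := by
  ext ⟨x, z⟩
  refine and_congr_right fun _ => not_congr ⟨?_, fun ⟨hxa, hzb, hxz⟩ => ?_⟩
  · rintro (⟨hne, hxa, hzb⟩ | ⟨rfl, hxz⟩)
    · exact ⟨hxa, hzb, fun h => absurd h hne⟩
    · obtain ⟨rfl, rfl⟩ := Prod.mk.inj hxz
      exact ⟨⟨Or.inr rfl, Or.inr rfl⟩, ⟨Or.inr rfl, Or.inr rfl⟩, fun _ => rfl⟩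
  · by_cases hab : a = b
    · subst hab
      exact Or.inr ⟨rfl, hxz rfl⟩
    · exact Or.inl ⟨hab, hxa, hzb⟩

theorem mem_pjiCorner_of_mem_pjiCorner_left (he : TransRel e) (hab : (a, b) ∈ e)
    (hU : U ⊆ cce e a b) (hxy : (x, y) ∈ pjiCorner e a b) (hyz : (y, z) ∈ e \ (pji e a b U \ pjiCorner e a b))
    (hxz : (x, z) ∈ pji e a b U) : (x, z) ∈ pjiCorner e a b := by
  obtain ⟨hxa, hyb, hxy⟩ := hxy
  refine ⟨hxa, ⟨(pjiSnd_subset_cce hab hU hxz.2.2).2, Or.inl (he.mem_of_rle_of_mem hyb.2 hyz.1)⟩,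
    fun hba => ?_⟩
  obtain ⟨hx, hy⟩ := Prod.mk.inj (hxy hba)
  -- with `a = b`, the pair `(y, z) = (a, z)` lies in `pji`, so it is a corner and `z = b`
  have hyz' : (y, z) ∈ pjiCorner e a b :=
    by_contra fun h => hyz.2 ⟨⟨hyz.1, Or.inl (hy.trans hba.symm), hxz.2.2⟩, h⟩
  rw [hx, (Prod.mk.inj (hyz'.2.2 hba)).2]

theorem mem_pjiCorner_of_mem_pjiCorner_right (he : TransRel e) (hab : (a, b) ∈ e)
    (hxy : (x, y) ∈ e \ (pji e a b U \ pjiCorner e a b)) (hyz : (y, z) ∈ pjiCorner e a b)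
    (hxz : (x, z) ∈ pji e a b U) : (x, z) ∈ pjiCorner e a b := by
  obtain ⟨hya, hzb, hyz⟩ := hyz
  refine ⟨⟨Or.inl (he.mem_of_mem_of_rle hxy.1 hya.1), (pjiFst_subset_cce hab hxz.2.1).1⟩, hzb,
    fun hba => ?_⟩
  obtain ⟨hy, hz⟩ := Prod.mk.inj (hyz hba)
  have hxy' : (x, y) ∈ pjiCorner e a b :=
    by_contra fun h => hxy.2 ⟨⟨hxy.1, hxz.2.1, Or.inl (hy.trans hba)⟩, h⟩
  rw [(Prod.mk.inj (hxy'.2.2 hba)).1, hz]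

theorem isClopenIn_pji_diff_pjiCorner (he : TransRel e) (hF : Ftriple e a b U) :
    IsClopenIn e (pji e a b U \ pjiCorner e a b) := by
  have hp := isClopenIn_pji he hF.1 hF.2.1
  refine ⟨sdiff_subset.trans hp.1, ?_, ?_⟩
  · rintro x y z ⟨hxy, hxy'⟩ ⟨hyz, -⟩
    refine ⟨hp.2.1 _ _ _ hxy hyz, fun ⟨hxa, _, hxz⟩ => hxy' ?_⟩
    -- the middle point lies in both factors of the product, which forces `y = a = b`
    obtain ⟨hya, hyb⟩ : y = a ∧ y = b := eq_of_mem_pjiFst_of_mem_pjiSnd hF.2.2 hyz.2.1 hxy.2.2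
    obtain ⟨hx, -⟩ := Prod.mk.inj (hxz (hya.symm.trans hyb))
    exact ⟨hxa, hyb ▸ ⟨Or.inr rfl, Or.inr rfl⟩, fun _ => by rw [hx, hyb]⟩
  · rintro x y z hxy hyz
    refine ⟨he _ _ _ hxy.1 hyz.1, fun ⟨hxz, hxz'⟩ => hxz' ?_⟩
    by_cases hxyp : (x, y) ∈ pji e a b U
    · exact mem_pjiCorner_of_mem_pjiCorner_left he hF.1 hF.2.1
        (by_contra fun h => hxy.2 ⟨hxyp, h⟩) hyz hxz
    by_cases hyzp : (y, z) ∈ pji e a b U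
    · exact mem_pjiCorner_of_mem_pjiCorner_right he hF.1 hxy
        (by_contra fun h => hyz.2 ⟨hyzp, h⟩) hxz
    exact absurd hxz (hp.2.2 _ _ _ ⟨hxy.1, hxyp⟩ ⟨hyz.1, hyzp⟩).2

theorem rle_diff_of_mem_pjiFst {u : Set (E × E)} {s : E} (hends : a ≠ b → a ∉ U ∧ b ∈ U)
    (hu : u ⊆ pji e a b U) (hxs : rle e x s) (hs : s ∈ pjiFst e a b U) (hx : a = b → x = a) :
    rle (e \ u) x s := by
  rcases hxs with hxs | rfl
  · by_cases hxsu : (x, s) ∈ u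
    · obtain ⟨hsa, hsb⟩ := eq_of_mem_pjiFst_of_mem_pjiSnd hends hs (hu hxsu).2.2
      exact Or.inr ((hx (hsa.symm.trans hsb)).trans hsa.symm)
    · exact Or.inl ⟨hxs, hxsu⟩
  · exact Or.inr rfl

theorem rle_diff_of_mem_pjiSnd {u : Set (E × E)} {t : E} (hends : a ≠ b → a ∉ U ∧ b ∈ U)
    (hu : u ⊆ pji e a b U) (htz : rle e t z) (ht : t ∈ pjiSnd b U) (hz : a = b → z = b) :
    rle (e \ u) t z := by
  rcases htz with htz | rfl
  · by_cases htzu : (t, z) ∈ u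
    · obtain ⟨hta, htb⟩ := eq_of_mem_pjiFst_of_mem_pjiSnd hends (hu htzu).2.1 ht
      exact Or.inr (htb.trans (hz (hta.symm.trans htb)).symm)
    · exact Or.inl ⟨htz, htzu⟩
  · exact Or.inr rfl

theorem subset_pji_diff_pjiCorner_of_ssubset (he : TransRel e) (hF : Ftriple e a b U)
    {u : Set (E × E)} (hu : IsOpenIn e u) (hup : u ⊂ pji e a b U) :
    u ⊆ pji e a b U \ pjiCorner e a b := by
  obtain ⟨hab, hU, hends⟩ := hF
  obtain ⟨⟨s, t⟩, hst, hstu⟩ := not_subset.1 hup.2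
  rintro ⟨x, z⟩ hxz
  refine ⟨hup.1 hxz, fun ⟨hxa, hzb, hc⟩ => ?_⟩
  -- `x ⊴ s ◁ t ⊴ z` with every step outside `u`, and `e \ u` is transitive
  have hxs : rle (e \ u) x s := rle_diff_of_mem_pjiFst hends hup.1
    (he.rle_trans hxa.1 (pjiFst_subset_cce hab hst.2.1).1) hst.2.1 fun h => (Prod.mk.inj (hc h)).1
  have htz : rle (e \ u) t z := rle_diff_of_mem_pjiSnd hends hup.1
    (he.rle_trans (pjiSnd_subset_cce hab hU hst.2.2).2 hzb.2) hst.2.2 fun h => (Prod.mk.inj (hc h)).2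
  exact (hu.2.mem_of_rle_of_mem hxs (hu.2.mem_of_mem_of_rle ⟨hst.1, hstu⟩ htz)).2 hxz

end Pji

/-- for `(a,b,U) ∈ F(e)`, the set `p = ⟨a,b,U⟩` is clopen and contains `(a,b)`;
moreover `p₋` is clopen and every open `u ⊊ p` satisfies `u ⊆ p₋`. -/
theorem pji_clopen_pminus {E : Type*} (e : Set (E × E)) (he : TransRel e)
    (a b : E) (U : Set E) (hF : Ftriple e a b U) :
    IsClopenIn e (pji e a b U) ∧ (a, b) ∈ pji e a b U ∧
    IsClopenIn e (pminus e a b U) ∧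
    (∀ u : Set (E × E), IsOpenIn e u → u ⊂ pji e a b U → u ⊆ pminus e a b U) := by
  rw [pminus_eq_pji_diff_pjiCorner]
  exact ⟨isClopenIn_pji he hF.1 hF.2.1, mk_mem_pji hF.1, isClopenIn_pji_diff_pjiCorner he hF,
    fun _ hu hup => subset_pji_diff_pjiCorner_of_ssubset he hF hu hup⟩
end

section
/- Let e be a transitive relation on a set E and let (a,b,U) ∈ F(e). Then every regular closed subset x of e with x ⊊ ⟨a,b,U⟩ satisfies x ⊆ p₋, where p₋ is the set associated to p = ⟨a,b,U⟩; hence ⟨a,b,U⟩ is a completely join-irreducible element of the lattice Reg(e), and p₋ is its unique lower cover in Reg(e). -/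
/-! Both `p = ⟨a,b,U⟩` and `p₋` are closed and open in `e`, hence regular closed.
The left ends `{a} ∪ Uᶜ` and right ends `{b} ∪ U` of pairs of `p` meet at most in `a`, and only
when `a = b`, so transitive closures of subsets of `p` add essentially nothing. Hence if a regular
closed `x ⊆ p` contains a pair `(c,d) ∈ p \ p₋`, that pair lies in the interior of `x`. As
`c ⊴ a` and `b ⊴ d`, any path `u → v` in `e \ x` between the ends of a pair of `p` would extend
to a path `c → u → v → d` in `e \ x`; so all of `p` lies in the interior of `x`, and `x = p`. -/

open Relation

section Closure

variable {E : Type*} {e x : Set (E × E)}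

theorem tcl_eq_self (hx : TransRel x) : tcl x = x := by
  have : IsTrans E (fun u v => (u, v) ∈ x) := ⟨hx⟩
  ext ⟨u, v⟩
  simp only [tcl, transGen_eq_self, Set.mem_ofPred_eq]

theorem RegClosed.of_transRel (hsub : x ⊆ e) (hx : TransRel x) (hc : TransRel (e \ x)) :
    RegClosed e x :=
  ⟨hsub, by rw [tint, tcl_eq_self hc, Set.sdiff_sdiff_cancel_left hsub, tcl_eq_self hx]⟩

theorem tint_subset_s12 : tint e x ⊆ x :=
  fun _ hz => by_contra fun h => hz.2 (TransGen.single ⟨hz.1, h⟩)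

theorem mem_tint_of_rle_diff {c d u v : E} (hcd : (c, d) ∈ tint e x) (huv : (u, v) ∈ e)
    (hcu : rle (e \ x) c u) (hvd : rle (e \ x) v d) : (u, v) ∈ tint e x := by
  refine ⟨huv, fun hpath => hcd.2 ?_⟩
  have hcv : TransGen (fun s t => (s, t) ∈ e \ x) c v := by
    rcases hcu with hcu | rfl
    exacts [TransGen.head hcu hpath, hpath]
  rcases hvd with hvd | rfl
  exacts [TransGen.tail hcv hvd, hcv]

variable {u v w : E}

theorem rle_trans_s12 (he : TransRel e) (h₁ : rle e u v) (h₂ : rle e v w) : rle e u w := by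
  rcases h₁ with h₁ | rfl
  · rcases h₂ with h₂ | rfl
    exacts [Or.inl (he _ _ _ h₁ h₂), Or.inl h₁]
  · exact h₂

theorem mem_of_rle_of_mem (he : TransRel e) (h₁ : rle e u v) (h₂ : (v, w) ∈ e) : (u, w) ∈ e := by
  rcases h₁ with h₁ | rfl
  exacts [he _ _ _ h₁ h₂, h₂]

theorem mem_of_mem_of_rle_s12 (he : TransRel e) (h₁ : (u, v) ∈ e) (h₂ : rle e v w) : (u, w) ∈ e := by
  rcases h₂ with h₂ | rfl
  exacts [he _ _ _ h₁ h₂, h₁]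

end Closure

section Pji

variable {E : Type*} {e : Set (E × E)} {a b : E} {U : Set E} {c d u v w : E}

theorem mem_pji_iff : (u, v) ∈ pji e a b U ↔
    (u, v) ∈ e ∧ (u = a ∨ u ∈ cce e a b ∧ u ∉ U) ∧ (v = b ∨ v ∈ U) := by
  simp [pji]

theorem rle_fst_of_mem_pji (h : (u, v) ∈ pji e a b U) : rle e a u := by
  rcases (mem_pji_iff.1 h).2.1 with rfl | hu
  exacts [Or.inr rfl, hu.1.1]

theorem Ftriple.rle_snd_of_mem_pji (hF : Ftriple e a b U) (h : (u, v) ∈ pji e a b U) :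
    rle e v b := by
  rcases (mem_pji_iff.1 h).2.2 with rfl | hv
  exacts [Or.inr rfl, (hF.2.1 hv).2]

theorem Ftriple.eq_of_mem_pji_of_mem_pji (hF : Ftriple e a b U) (h₁ : (u, w) ∈ pji e a b U)
    (h₂ : (w, v) ∈ pji e a b U) : a = b ∧ w = a := by
  obtain ⟨-, -, hw₁⟩ := mem_pji_iff.1 h₁
  obtain ⟨-, hw₂, -⟩ := mem_pji_iff.1 h₂
  by_cases hab : a = b
  · subst hab
    rcases hw₂ with rfl | hw₂
    · exact ⟨rfl, rfl⟩
    · rcases hw₁ with rfl | hw₁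
      exacts [⟨rfl, rfl⟩, absurd hw₁ hw₂.2]
  · obtain ⟨haU, hbU⟩ := hF.2.2 hab
    rcases hw₁ with rfl | hw₁ <;> rcases hw₂ with rfl | hw₂
    exacts [absurd rfl hab, absurd hbU hw₂.2, absurd hw₁ haU, absurd hw₁ hw₂.2]

theorem Ftriple.mem_tcl_of_subset_pji (hF : Ftriple e a b U) {q : Set (E × E)}
    (hq : q ⊆ pji e a b U) (h : (u, v) ∈ tcl q) : (u, v) ∈ q ∨ a = b ∧ (u, a) ∈ q := by
  change TransGen (fun s t => (s, t) ∈ q) u v at h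
  induction h with
  | single h => exact Or.inl h
  | tail _ hwv ih =>
    rcases ih with huw | hab
    · obtain ⟨hab, rfl⟩ := hF.eq_of_mem_pji_of_mem_pji (hq huw) (hq hwv)
      exact Or.inr ⟨hab, huw⟩
    · exact Or.inr hab

theorem pji_transRel (he : TransRel e) : TransRel (pji e a b U) := by
  intro u v w huv hvw
  rw [mem_pji_iff] at huv hvw ⊢
  exact ⟨he _ _ _ huv.1 hvw.1, huv.2.1, hvw.2.2⟩

theorem Ftriple.mem_pji_or_mem_pji (hF : Ftriple e a b U) (he : TransRel e)
    (huw : (u, w) ∈ pji e a b U) (huv : (u, v) ∈ e) (hvw : (v, w) ∈ e) :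
    (u, v) ∈ pji e a b U ∨ (v, w) ∈ pji e a b U := by
  obtain ⟨-, hu, hw⟩ := mem_pji_iff.1 huw
  by_cases hvU : v ∈ U
  · exact Or.inl (mem_pji_iff.2 ⟨huv, hu, Or.inr hvU⟩)
  · have hav : rle e a v := Or.inl (mem_of_rle_of_mem he (rle_fst_of_mem_pji huw) huv)
    have hvb : rle e v b := Or.inl (mem_of_mem_of_rle_s12 he hvw (hF.rle_snd_of_mem_pji huw))
    exact Or.inr (mem_pji_iff.2 ⟨hvw, Or.inr ⟨⟨hav, hvb⟩, hvU⟩, hw⟩)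

theorem Ftriple.transRel_diff_pji (hF : Ftriple e a b U) (he : TransRel e) :
    TransRel (e \ pji e a b U) := by
  intro u v w huv hvw
  refine ⟨he _ _ _ huv.1 hvw.1, fun huw => ?_⟩
  rcases hF.mem_pji_or_mem_pji he huw huv.1 hvw.1 with h | h
  exacts [huv.2 h, hvw.2 h]

theorem notMem_pminus_iff (h : (c, d) ∈ pji e a b U) : (c, d) ∉ pminus e a b U ↔
    (a ≠ b ∧ eqv e c a ∧ eqv e d b) ∨ (a = b ∧ c = a ∧ d = a) := by
  simp only [pminus, Set.mem_ofPred_eq, h, true_and, not_not, Prod.mk.injEq]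

theorem rle_of_notMem_pminus (h : (c, d) ∈ pji e a b U) (h' : (c, d) ∉ pminus e a b U) :
    rle e c a ∧ rle e b d := by
  rcases (notMem_pminus_iff h).1 h' with ⟨-, hca, hdb⟩ | ⟨rfl, rfl, rfl⟩
  exacts [⟨hca.1, hdb.2⟩, ⟨Or.inr rfl, Or.inr rfl⟩]

theorem eq_of_notMem_pminus (hab : a = b) (h : (c, d) ∈ pji e a b U)
    (h' : (c, d) ∉ pminus e a b U) : c = a ∧ d = a := by
  rcases (notMem_pminus_iff h).1 h' with ⟨hab', -⟩ | ⟨-, hc, hd⟩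
  exacts [absurd hab hab', ⟨hc, hd⟩]

theorem Ftriple.pminus_ssubset_pji (hF : Ftriple e a b U) : pminus e a b U ⊂ pji e a b U := by
  have hp : (a, b) ∈ pji e a b U := mem_pji_iff.2 ⟨hF.1, Or.inl rfl, Or.inl rfl⟩
  refine Set.ssubset_iff_of_subset (fun _ hz => hz.1) |>.2 ⟨(a, b), hp, ?_⟩
  rw [notMem_pminus_iff hp]
  by_cases hab : a = b
  · exact Or.inr ⟨hab, rfl, hab.symm⟩
  · exact Or.inl ⟨hab, ⟨Or.inr rfl, Or.inr rfl⟩, Or.inr rfl, Or.inr rfl⟩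

theorem Ftriple.pminus_transRel (hF : Ftriple e a b U) (he : TransRel e) :
    TransRel (pminus e a b U) := by
  intro u v w huv hvw
  have huw : (u, w) ∈ pji e a b U := pji_transRel he _ _ _ huv.1 hvw.1
  by_contra h
  obtain ⟨hab, rfl⟩ := hF.eq_of_mem_pji_of_mem_pji huv.1 hvw.1
  obtain ⟨rfl, -⟩ := eq_of_notMem_pminus hab huw h
  exact huv.2 (Or.inr ⟨hab, rfl⟩)

theorem Ftriple.mem_pminus_of_notMem_left (hF : Ftriple e a b U) (he : TransRel e)
    (huv : (u, v) ∈ pji e a b U) (huv' : (u, v) ∉ pminus e a b U) (hvw : (v, w) ∈ e)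
    (huw : (u, w) ∈ pminus e a b U) : (v, w) ∈ pminus e a b U := by
  rcases (notMem_pminus_iff huv).1 huv' with ⟨hab, hua, hvb⟩ | ⟨-, rfl, rfl⟩
  · have hwb : eqv e w b :=
      ⟨hF.rle_snd_of_mem_pji huw.1, Or.inl (mem_of_rle_of_mem he hvb.2 hvw)⟩
    exact absurd huw ((notMem_pminus_iff huw.1).2 (Or.inl ⟨hab, hua, hwb⟩))
  · exact huw

theorem Ftriple.mem_pminus_of_notMem_right (hF : Ftriple e a b U) (he : TransRel e)
    (hvw : (v, w) ∈ pji e a b U) (hvw' : (v, w) ∉ pminus e a b U) (huv : (u, v) ∈ e)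
    (huw : (u, w) ∈ pminus e a b U) : (u, v) ∈ pminus e a b U := by
  rcases (notMem_pminus_iff hvw).1 hvw' with ⟨hab, hva, hwb⟩ | ⟨-, rfl, rfl⟩
  · have hua : eqv e u a :=
      ⟨Or.inl (mem_of_mem_of_rle_s12 he huv hva.1), rle_fst_of_mem_pji huw.1⟩
    exact absurd huw ((notMem_pminus_iff huw.1).2 (Or.inl ⟨hab, hua, hwb⟩))
  · exact huw

theorem Ftriple.transRel_diff_pminus (hF : Ftriple e a b U) (he : TransRel e) :
    TransRel (e \ pminus e a b U) := by
  intro u v w huv hvw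
  refine ⟨he _ _ _ huv.1 hvw.1, fun huw => ?_⟩
  rcases hF.mem_pji_or_mem_pji he huw.1 huv.1 hvw.1 with h | h
  · exact hvw.2 (hF.mem_pminus_of_notMem_left he h huv.2 hvw.1 huw)
  · exact huv.2 (hF.mem_pminus_of_notMem_right he h hvw.2 huv.1 huw)

theorem Ftriple.mem_tint_of_notMem_pminus (hF : Ftriple e a b U) {x : Set (E × E)}
    (hx : RegClosed e x) (hxp : x ⊆ pji e a b U) (hcd : (c, d) ∈ x)
    (hcd' : (c, d) ∉ pminus e a b U) : (c, d) ∈ tint e x := by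
  have hcl : (c, d) ∈ tcl (tint e x) := hx.2 ▸ hcd
  rcases hF.mem_tcl_of_subset_pji (tint_subset_s12.trans hxp) hcl with h | ⟨hab, h⟩
  · exact h
  · rwa [(eq_of_notMem_pminus hab (hxp hcd) hcd').2]

theorem Ftriple.pji_subset_tint (hF : Ftriple e a b U) (he : TransRel e) {x : Set (E × E)}
    (hxp : x ⊆ pji e a b U) (hcd : (c, d) ∈ tint e x) (hcd' : (c, d) ∉ pminus e a b U) :
    pji e a b U ⊆ tint e x := by
  have hcdp : (c, d) ∈ pji e a b U := hxp (tint_subset_s12 hcd)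
  obtain ⟨hca, hbd⟩ := rle_of_notMem_pminus hcdp hcd'
  rintro ⟨u, v⟩ huv
  have hcu : rle (e \ x) c u := by
    by_cases hcux : (c, u) ∈ x
    · obtain ⟨hab, rfl⟩ := hF.eq_of_mem_pji_of_mem_pji (hxp hcux) huv
      exact Or.inr (eq_of_notMem_pminus hab hcdp hcd').1
    · rcases rle_trans_s12 he hca (rle_fst_of_mem_pji huv) with h | rfl
      exacts [Or.inl ⟨h, hcux⟩, Or.inr rfl]
  have hvd : rle (e \ x) v d := by
    by_cases hvdx : (v, d) ∈ x
    · obtain ⟨hab, rfl⟩ := hF.eq_of_mem_pji_of_mem_pji huv (hxp hvdx)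
      exact Or.inr (eq_of_notMem_pminus hab hcdp hcd').2.symm
    · rcases rle_trans_s12 he (hF.rle_snd_of_mem_pji huv) hbd with h | rfl
      exacts [Or.inl ⟨h, hvdx⟩, Or.inr rfl]
  exact mem_tint_of_rle_diff hcd huv.1 hcu hvd

theorem Ftriple.subset_pminus_of_ssubset_pji (hF : Ftriple e a b U) (he : TransRel e)
    {x : Set (E × E)} (hx : RegClosed e x) (hxp : x ⊂ pji e a b U) : x ⊆ pminus e a b U := by
  rintro ⟨c, d⟩ hcd
  by_contra hcd'
  have hint := hF.mem_tint_of_notMem_pminus hx hxp.1 hcd hcd'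
  exact hxp.not_subset ((hF.pji_subset_tint he hxp.1 hint hcd').trans tint_subset_s12)

end Pji

/-- for `(a,b,U) ∈ F(e)`, every regular closed `x ⊊ ⟨a,b,U⟩` satisfies
`x ⊆ p₋`; hence `⟨a,b,U⟩` is completely join-irreducible in `Reg(e)` with unique lower
cover `p₋`. -/
theorem pji_completelyJoinIrreducible {E : Type*} (e : Set (E × E)) (he : TransRel e)
    (a b : E) (U : Set E) (hF : Ftriple e a b U) :
    RegClosed e (pji e a b U) ∧ RegClosed e (pminus e a b U) ∧
    pminus e a b U ⊂ pji e a b U ∧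
    (∀ x : Set (E × E), RegClosed e x → x ⊂ pji e a b U → x ⊆ pminus e a b U) :=
  ⟨.of_transRel Set.inter_subset_left (pji_transRel he) (hF.transRel_diff_pji he),
    .of_transRel (fun _ hz => hz.1.1) (hF.pminus_transRel he) (hF.transRel_diff_pminus he),
    hF.pminus_ssubset_pji, fun _ hx hxp => hF.subset_pminus_of_ssubset_pji he hx hxp⟩
end
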